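/- Let A be a diversified formula (each propositional letter occurs at most once) built from propositional letters using only ∧ and ∨, and let B be a subformula of A. If the letters occurring in A but not in B are p₁,…,pₙ, then there exist truth constants S₁,…,Sₙ ∈ {⊤,⊥} such that the formula obtained from A by substituting Sᵢ for pᵢ (for each i) is classically equivalent to B (i.e., the biconditional is a tautology). -/
import Mathlib


inductive Form where
  | var : ℕ → Form
  | top : Form
  | bot : Form
  | neg : Form → Form
  | and : Form → Form → Form
  | or  : Form → Form → Form
deriving DecidableEq

namespace Form

def eval (v : ℕ → Bool) : Form → Bool
  | var n => v n
  | top => true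
  | bot => false
  | neg A => !(A.eval v)
  | and A B => A.eval v && B.eval v
  | or A B => A.eval v || B.eval v

def letters : Form → Multiset ℕ
  | var n => {n}
  | top => 0
  | bot => 0
  | neg A => A.letters
  | and A B => A.letters + B.letters
  | or A B => A.letters + B.letters

end Form

/-- `A ↔ B` is a tautology. -/
def TautEquiv (A B : Form) : Prop := ∀ v : ℕ → Bool, A.eval v = B.eval v

/-- `A` is a tautology. -/
def Taut (A : Form) : Prop := ∀ v : ℕ → Bool, A.eval v = true

/-- every letter occurs at most once -/
def Diversified (A : Form) : Prop := A.letters.Nodup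

/-- built from letters using only ∧ and ∨ -/
def IsAndOr : Form → Prop
  | .var _ => True
  | .and A B => IsAndOr A ∧ IsAndOr B
  | .or A B => IsAndOr A ∧ IsAndOr B
  | _ => False

/-- substitution of formulas for letters -/
def Form.subst (s : ℕ → Form) : Form → Form
  | .var n => s n
  | .top => .top
  | .bot => .bot
  | .neg A => .neg (A.subst s)
  | .and A B => .and (A.subst s) (B.subst s)
  | .or A B => .or (A.subst s) (B.subst s)

/-- `Subf B A`: B is a subformula of A -/
inductive Subf : Form → Form → Prop
  | refl (A : Form) : Subf A A
  | neg  : Subf A B → Subf A (.neg B)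
  | andL : Subf A B → Subf A (.and B C)
  | andR : Subf A C → Subf A (.and B C)
  | orL  : Subf A B → Subf A (.or B C)
  | orR  : Subf A C → Subf A (.or B C)

lemma subst_var (A : Form) : A.subst .var = A := by
  induction A <;> simp [Form.subst, *]

lemma subst_congr (A : Form) (s t : ℕ → Form)
    (h : ∀ p ∈ A.letters, s p = t p) : A.subst s = A.subst t := by
  induction A with
  | var n => exact h n (by simp [Form.letters])
  | top => rfl
  | bot => rfl
  | neg A ih => simp [Form.subst]; exact ih fun p hp => h p (by simpa [Form.letters] using hp)
  | and A B ihA ihB =>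
      simp [Form.subst]
      exact ⟨ihA fun p hp => h p (by simp [Form.letters, hp]),
             ihB fun p hp => h p (by simp [Form.letters, hp])⟩
  | or A B ihA ihB =>
      simp [Form.subst]
      exact ⟨ihA fun p hp => h p (by simp [Form.letters, hp]),
             ihB fun p hp => h p (by simp [Form.letters, hp])⟩

lemma subf_letters {B A : Form} (h : Subf B A) : ∀ p ∈ B.letters, p ∈ A.letters := by
  induction h with
  | refl => exact fun p hp => hp
  | neg _ ih => exact fun p hp => by simpa [Form.letters] using ih p hp
  | andL _ ih => exact fun p hp => by simp [Form.letters]; exact Or.inl (ih p hp)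
  | andR _ ih => exact fun p hp => by simp [Form.letters]; exact Or.inr (ih p hp)
  | orL _ ih => exact fun p hp => by simp [Form.letters]; exact Or.inl (ih p hp)
  | orR _ ih => exact fun p hp => by simp [Form.letters]; exact Or.inr (ih p hp)

lemma eval_all_top (C : Form) (hC : IsAndOr C) (s : ℕ → Form)
    (h : ∀ p ∈ C.letters, s p = .top) (v : ℕ → Bool) :
    (C.subst s).eval v = true := by
  induction C with
  | var n => simp [Form.subst, h n (by simp [Form.letters]), Form.eval]
  | top => cases hC
  | bot => cases hC
  | neg A ih => cases hC
  | and A B ihA ihB =>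
      simp [Form.subst, Form.eval]
      exact ⟨ihA hC.1 fun p hp => h p (by simp [Form.letters, hp]),
             ihB hC.2 fun p hp => h p (by simp [Form.letters, hp])⟩
  | or A B ihA ihB =>
      have := ihA hC.1 fun p hp => h p (by simp [Form.letters, hp])
      simp [Form.subst, Form.eval, this]

lemma eval_all_bot (C : Form) (hC : IsAndOr C) (s : ℕ → Form)
    (h : ∀ p ∈ C.letters, s p = .bot) (v : ℕ → Bool) :
    (C.subst s).eval v = false := by
  induction C with
  | var n => simp [Form.subst, h n (by simp [Form.letters]), Form.eval]
  | top => cases hC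
  | bot => cases hC
  | neg A ih => cases hC
  | and A B ihA ihB =>
      have := ihA hC.1 fun p hp => h p (by simp [Form.letters, hp])
      simp [Form.subst, Form.eval, this]
  | or A B ihA ihB =>
      simp [Form.subst, Form.eval]
      exact ⟨ihA hC.1 fun p hp => h p (by simp [Form.letters, hp]),
             ihB hC.2 fun p hp => h p (by simp [Form.letters, hp])⟩

theorem stmt0 (A B : Form) (hAO : IsAndOr A) (hdiv : Diversified A)
    (hsub : Subf B A) :
    ∃ s : ℕ → Form,
      (∀ p, p ∈ B.letters → s p = .var p) ∧
      (∀ p, p ∈ A.letters → p ∉ B.letters → s p = .top ∨ s p = .bot) ∧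
      (∀ p, p ∉ A.letters → s p = .var p) ∧
      TautEquiv (A.subst s) B := by
  revert hAO hdiv
  induction hsub with
  | refl =>
      intro hAO hdiv
      exact ⟨.var, fun p _ => rfl, fun p hp hnp => absurd hp hnp, fun p _ => rfl,
        fun v => by rw [subst_var]⟩
  | neg h ih => intro hAO _; exact hAO.elim
  | @andL A₁ A₂ h ih =>
      intro hAO hdiv
      obtain ⟨h1, h2⟩ := hAO
      rw [Diversified, Form.letters, Multiset.nodup_add] at hdiv
      obtain ⟨hn1, hn2, hd⟩ := hdiv
      have hdL : ∀ {p}, p ∈ A₁.letters → p ∉ A₂.letters :=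
        fun hx => Multiset.disjoint_left.mp hd hx
      have hdR : ∀ {p}, p ∈ A₂.letters → p ∉ A₁.letters :=
        fun hx => Multiset.disjoint_right.mp hd hx
      obtain ⟨s₁, c1, c2, c3, c4⟩ := ih h1 hn1
      refine ⟨fun p => if p ∈ A₂.letters then .top else s₁ p, ?_, ?_, ?_, ?_⟩
      · intro p hp
        have hp1 := subf_letters h p hp
        simp [hdL hp1, c1 p hp]
      · intro p hp hnp
        rw [Form.letters, Multiset.mem_add] at hp
        by_cases hpo : p ∈ A₂.letters
        · simp [hpo]
        · have hps : p ∈ A₁.letters := by tauto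
          simpa [hpo] using c2 p hps hnp
      · intro p hp
        rw [Form.letters, Multiset.mem_add] at hp
        push_neg at hp
        have : p ∉ A₂.letters := by tauto
        have : p ∉ A₁.letters := by tauto
        simp [*, c3 p this]
      · intro v
        have e1 : A₁.subst (fun p => if p ∈ A₂.letters then .top else s₁ p)
            = A₁.subst s₁ := subst_congr _ _ _ fun p hp => by simp [hdL hp]
        have e2 := eval_all_top A₂ h2 (fun p => if p ∈ A₂.letters then .top else s₁ p)
          (fun p hp => by simp [hp]) v
        simp [Form.subst, Form.eval, e1, e2, c4 v]
  | @andR A₂ A₁ h ih =>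
      intro hAO hdiv
      obtain ⟨h1, h2⟩ := hAO
      rw [Diversified, Form.letters, Multiset.nodup_add] at hdiv
      obtain ⟨hn1, hn2, hd⟩ := hdiv
      have hdL : ∀ {p}, p ∈ A₁.letters → p ∉ A₂.letters :=
        fun hx => Multiset.disjoint_left.mp hd hx
      have hdR : ∀ {p}, p ∈ A₂.letters → p ∉ A₁.letters :=
        fun hx => Multiset.disjoint_right.mp hd hx
      obtain ⟨s₁, c1, c2, c3, c4⟩ := ih h2 hn2
      refine ⟨fun p => if p ∈ A₁.letters then .top else s₁ p, ?_, ?_, ?_, ?_⟩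
      · intro p hp
        have hp1 := subf_letters h p hp
        simp [hdR hp1, c1 p hp]
      · intro p hp hnp
        rw [Form.letters, Multiset.mem_add] at hp
        by_cases hpo : p ∈ A₁.letters
        · simp [hpo]
        · have hps : p ∈ A₂.letters := by tauto
          simpa [hpo] using c2 p hps hnp
      · intro p hp
        rw [Form.letters, Multiset.mem_add] at hp
        push_neg at hp
        have : p ∉ A₁.letters := by tauto
        have : p ∉ A₂.letters := by tauto
        simp [*, c3 p this]
      · intro v
        have e1 : A₂.subst (fun p => if p ∈ A₁.letters then .top else s₁ p)
            = A₂.subst s₁ := subst_congr _ _ _ fun p hp => by simp [hdR hp]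
        have e2 := eval_all_top A₁ h1 (fun p => if p ∈ A₁.letters then .top else s₁ p)
          (fun p hp => by simp [hp]) v
        simp [Form.subst, Form.eval, e1, e2, c4 v]
  | @orL A₁ A₂ h ih =>
      intro hAO hdiv
      obtain ⟨h1, h2⟩ := hAO
      rw [Diversified, Form.letters, Multiset.nodup_add] at hdiv
      obtain ⟨hn1, hn2, hd⟩ := hdiv
      have hdL : ∀ {p}, p ∈ A₁.letters → p ∉ A₂.letters :=
        fun hx => Multiset.disjoint_left.mp hd hx
      have hdR : ∀ {p}, p ∈ A₂.letters → p ∉ A₁.letters :=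
        fun hx => Multiset.disjoint_right.mp hd hx
      obtain ⟨s₁, c1, c2, c3, c4⟩ := ih h1 hn1
      refine ⟨fun p => if p ∈ A₂.letters then .bot else s₁ p, ?_, ?_, ?_, ?_⟩
      · intro p hp
        have hp1 := subf_letters h p hp
        simp [hdL hp1, c1 p hp]
      · intro p hp hnp
        rw [Form.letters, Multiset.mem_add] at hp
        by_cases hpo : p ∈ A₂.letters
        · simp [hpo]
        · have hps : p ∈ A₁.letters := by tauto
          simpa [hpo] using c2 p hps hnp
      · intro p hp
        rw [Form.letters, Multiset.mem_add] at hp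
        push_neg at hp
        have : p ∉ A₂.letters := by tauto
        have : p ∉ A₁.letters := by tauto
        simp [*, c3 p this]
      · intro v
        have e1 : A₁.subst (fun p => if p ∈ A₂.letters then .bot else s₁ p)
            = A₁.subst s₁ := subst_congr _ _ _ fun p hp => by simp [hdL hp]
        have e2 := eval_all_bot A₂ h2 (fun p => if p ∈ A₂.letters then .bot else s₁ p)
          (fun p hp => by simp [hp]) v
        simp [Form.subst, Form.eval, e1, e2, c4 v]
  | @orR A₂ A₁ h ih =>
      intro hAO hdiv
      obtain ⟨h1, h2⟩ := hAO
      rw [Diversified, Form.letters, Multiset.nodup_add] at hdiv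
      obtain ⟨hn1, hn2, hd⟩ := hdiv
      have hdL : ∀ {p}, p ∈ A₁.letters → p ∉ A₂.letters :=
        fun hx => Multiset.disjoint_left.mp hd hx
      have hdR : ∀ {p}, p ∈ A₂.letters → p ∉ A₁.letters :=
        fun hx => Multiset.disjoint_right.mp hd hx
      obtain ⟨s₁, c1, c2, c3, c4⟩ := ih h2 hn2
      refine ⟨fun p => if p ∈ A₁.letters then .bot else s₁ p, ?_, ?_, ?_, ?_⟩
      · intro p hp
        have hp1 := subf_letters h p hp
        simp [hdR hp1, c1 p hp]
      · intro p hp hnp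
        rw [Form.letters, Multiset.mem_add] at hp
        by_cases hpo : p ∈ A₁.letters
        · simp [hpo]
        · have hps : p ∈ A₂.letters := by tauto
          simpa [hpo] using c2 p hps hnp
      · intro p hp
        rw [Form.letters, Multiset.mem_add] at hp
        push_neg at hp
        have : p ∉ A₁.letters := by tauto
        have : p ∉ A₂.letters := by tauto
        simp [*, c3 p this]
      · intro v
        have e1 : A₂.subst (fun p => if p ∈ A₁.letters then .bot else s₁ p)
            = A₂.subst s₁ := subst_congr _ _ _ fun p hp => by simp [hdR hp]
        have e2 := eval_all_bot A₁ h1 (fun p => if p ∈ A₁.letters then .bot else s₁ p)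
          (fun p hp => by simp [hp]) v
        simp [Form.subst, Form.eval, e1, e2, c4 v]
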